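/- Let L ⊆ S* be a normal form of G, let C₁, C₂ > 0 be constants, and suppose that for each word w = s₁…s_m ∈ L and each k ∈ {1,…,m} a word u_k^w ∈ S* is given with π(u_k^w) = e and C₁·√k ≤ |u_k^w| ≤ C₂·√k. For w = s₁…s_m set w' = s₁ u₁^w s₂ u₂^w … s_m u_m^w (and ε' = ε for the empty word), and let L'' = { w' : w ∈ L }. Then L'' is a normal form of G and its fellow-traveler function s satisfies s(n) ⪯ n^{2/3}. -/
import Mathlib


/-- The alphabet `S = A ∪ A⁻¹` for a generating tuple of `m` elements:
a letter is a generator index together with a sign (`true` = the generator,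
`false` = its inverse). -/
abbrev Letter (m : ℕ) := Fin m × Bool

/-- Evaluation of a letter in the group. -/
def evalLetter {G : Type*} [Group G] {m : ℕ} (A : Fin m → G) (l : Letter m) : G :=
  if l.2 then A l.1 else (A l.1)⁻¹

/-- The canonical projection `π : S* → G`. -/
def wordEval {G : Type*} [Group G] {m : ℕ} (A : Fin m → G) (w : List (Letter m)) : G :=
  (w.map (evalLetter A)).prod

/-- The word metric `d_A` on `G` relative to `A`. -/
noncomputable def wordDist {G : Type*} [Group G] {m : ℕ} (A : Fin m → G) (g h : G) : ℕ :=
  sInf {n | ∃ w : List (Letter m), wordEval A w = g⁻¹ * h ∧ w.length = n}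

/-- `L ⊆ S*` is a normal form of `G`: `π` restricted to `L` is a bijection onto `G`. -/
def IsNormalForm {G : Type*} [Group G] {m : ℕ} (A : Fin m → G)
    (L : Set (List (Letter m))) : Prop :=
  ∀ g : G, ∃! w, w ∈ L ∧ wordEval A w = g

/-- The fellow-traveler function `s(n)` of a normal form `L`. -/
noncomputable def ftFun {G : Type*} [Group G] {m : ℕ} (A : Fin m → G)
    (L : Set (List (Letter m))) (n : ℕ) : ℕ :=
  sSup {d | ∃ t ≤ n, ∃ w₁ ∈ L, ∃ w₂ ∈ L, ∃ i : Fin m,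
    wordEval A w₁ * A i = wordEval A w₂ ∧
    d = wordDist A (wordEval A (w₁.take t)) (wordEval A (w₂.take t))}

/-- `h ⪯ f` : there are positive integers `K, M` and `N₀ ≥ 0` with
`h n ≤ K * f (M * n)` for all `n ≥ N₀`. -/
def FPreceq (h f : ℕ → ℝ) : Prop :=
  ∃ K M N₀ : ℕ, 0 < K ∧ 0 < M ∧ ∀ n ≥ N₀, h n ≤ (K : ℝ) * f (M * n)

/-- `h ≪ f` : there is an unbounded nondecreasing nonnegative function `t`
with `h·t ⪯ f`. -/
def FLl (h f : ℕ → ℝ) : Prop :=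
  ∃ t : ℕ → ℝ, Monotone t ∧ (∀ n, 0 ≤ t n) ∧ (∀ C : ℝ, ∃ n, C < t n) ∧
    FPreceq (fun n => h n * t n) f

/-- A normal form is quasigeodesic if `|w| ≤ C (d_A(π(w)) + 1)` for all `w ∈ L`. -/
def Quasigeodesic {G : Type*} [Group G] {m : ℕ} (A : Fin m → G)
    (L : Set (List (Letter m))) : Prop :=
  ∃ C : ℝ, 0 < C ∧ ∀ w ∈ L, (w.length : ℝ) ≤ C * ((wordDist A 1 (wordEval A w) : ℝ) + 1)

/-- A normal form is quasiregular with constant `c` if every prefix of a word of `L`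
can be extended by a word of length at most `c` to a word of `L`. -/
def Quasiregular {m : ℕ} (L : Set (List (Letter m))) (c : ℕ) : Prop :=
  ∀ w ∈ L, ∀ u : List (Letter m), u <+: w → ∃ x : List (Letter m), x.length ≤ c ∧ u ++ x ∈ L

/-- A normal form is quasiprefix-closed with constant `C`. -/
def QuasiPrefixClosed {m : ℕ} (L : Set (List (Letter m))) (C : ℕ) : Prop :=
  ∀ u v : List (Letter m), u ++ v ∈ L →
    ∃ x : List (Letter m), x <+: v ∧ x.length ≤ C ∧ u ++ x ∈ L

/-- A language is prefix-closed. -/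
def PrefixClosed {m : ℕ} (L : Set (List (Letter m))) : Prop :=
  ∀ w ∈ L, ∀ u : List (Letter m), u <+: w → u ∈ L


/-- `interleave u k (s₁ … s_r) = s₁ u(k+1) s₂ u(k+2) … s_r u(k+r)`:
insert the word `u j` after the `j`-th letter. -/
def interleave {m : ℕ} (u : ℕ → List (Letter m)) : ℕ → List (Letter m) → List (Letter m)
  | _, [] => []
  | k, s :: rest => s :: (u (k + 1) ++ interleave u (k + 1) rest)

section Helpers

variable {G : Type*} [Group G] {m : ℕ} (A : Fin m → G)

lemma wordEval_nil : wordEval A ([] : List (Letter m)) = 1 := rfl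

lemma wordEval_cons (s : Letter m) (w : List (Letter m)) :
    wordEval A (s :: w) = evalLetter A s * wordEval A w := by
  simp [wordEval]

lemma wordEval_append (v w : List (Letter m)) :
    wordEval A (v ++ w) = wordEval A v * wordEval A w := by
  simp [wordEval]

def invWord {m : ℕ} (w : List (Letter m)) : List (Letter m) :=
  (w.map (fun l => (l.1, !l.2))).reverse

lemma wordEval_invWord (w : List (Letter m)) :
    wordEval A (invWord w) = (wordEval A w)⁻¹ := by
  induction w with
  | nil => simp [invWord, wordEval_nil]
  | cons s rest ih =>
    have : invWord (s :: rest) = invWord rest ++ [(s.1, !s.2)] := by simp [invWord]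
    have hinv : evalLetter A ((s.1, !s.2) : Letter m) = (evalLetter A s)⁻¹ := by
      cases s with
      | mk a b => cases b <;> simp [evalLetter]
    rw [this, wordEval_append, ih, wordEval_cons A s rest, wordEval_cons A _ [],
      wordEval_nil, mul_one, hinv, mul_inv_rev]

lemma length_invWord (w : List (Letter m)) : (invWord w).length = w.length := by
  simp [invWord]

lemma wordDist_le (g h : G) (v : List (Letter m)) (hv : wordEval A v = g⁻¹ * h) :
    wordDist A g h ≤ v.length :=
  Nat.sInf_le ⟨v, hv, rfl⟩

lemma wordDist_le_two (g h : G) (v₁ v₂ : List (Letter m))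
    (h1 : wordEval A v₁ = g) (h2 : wordEval A v₂ = h) :
    wordDist A g h ≤ v₁.length + v₂.length := by
  have := wordDist_le A g h (invWord v₁ ++ v₂)
    (by rw [wordEval_append, wordEval_invWord, h1, h2])
  simpa [length_invWord] using this

lemma interleave_eval (u : ℕ → List (Letter m)) :
    ∀ (w : List (Letter m)) (c : ℕ),
      (∀ i, c < i → i ≤ c + w.length → wordEval A (u i) = 1) →
      wordEval A (interleave u c w) = wordEval A w := by
  intro w
  induction w with
  | nil => intro c _; rfl
  | cons s rest ih =>
    intro c H
    rw [show interleave u c (s :: rest) = s :: (u (c+1) ++ interleave u (c+1) rest) from rfl]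
    rw [wordEval_cons, wordEval_append, wordEval_cons]
    rw [H (c+1) (by omega) (by simp)]
    rw [ih (c+1) (fun i h1 h2 => H i (by omega) (by simp at h2 ⊢; omega))]
    group

lemma interleave_take (u : ℕ → List (Letter m)) :
    ∀ (w : List (Letter m)) (c t : ℕ),
      (∀ i, c < i → i ≤ c + w.length → wordEval A (u i) = 1) →
      ∃ j p : ℕ, j ≤ w.length ∧ (j = 0 → p = 0) ∧ p ≤ (u (c + j)).length ∧
        wordEval A ((interleave u c w).take t) =
          wordEval A (w.take j ++ (u (c + j)).take p) ∧
        (1 ≤ j → j - 1 + ∑ i ∈ Finset.range (j - 1), (u (c + 1 + i)).length < t) := by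
  intro w
  induction w with
  | nil =>
    intro c t _
    exact ⟨0, 0, by simp [interleave]⟩
  | cons s rest ih =>
    intro c t H
    match t with
    | 0 => exact ⟨0, 0, by simp⟩
    | Nat.succ t' =>
      rw [show interleave u c (s :: rest) = s :: (u (c+1) ++ interleave u (c+1) rest) from rfl]
      by_cases hta : t' ≤ (u (c+1)).length
      · refine ⟨1, t', by simp, by simp, by simpa using hta, ?_, by intro _; simp⟩
        rw [List.take_succ_cons, List.take_append,
          Nat.sub_eq_zero_of_le hta, List.take_zero, List.append_nil]
        simp [wordEval_cons, wordEval_append]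
      · push_neg at hta
        obtain ⟨j', p, hj'le, hj0, hple, heval, hlb⟩ :=
          ih (c+1) (t' - (u (c+1)).length)
            (fun i h1 h2 => H i (by omega) (by simp at h2 ⊢; omega))
        refine ⟨j' + 1, p, by simpa using hj'le, by simp, ?_, ?_, ?_⟩
        · rw [show c + (j' + 1) = c + 1 + j' by omega]; exact hple
        · have hH : wordEval A (u (c+1)) = 1 := H (c+1) (by omega) (by simp)
          simp only [List.take_succ_cons, List.take_append,
            List.take_of_length_le (le_of_lt hta), List.cons_append, wordEval_cons,
            wordEval_append, show c + (j' + 1) = c + 1 + j' from by omega, hH,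
            one_mul, heval]
        · intro _
          have hsum : ∑ i ∈ Finset.range (j' + 1 - 1), (u (c + 1 + i)).length =
              (∑ i ∈ Finset.range j' , (u (c + 1 + i)).length) := by norm_num
          rcases Nat.eq_zero_or_pos j' with hj | hj
          · subst hj; simpa using Nat.succ_pos t'
          · have h1 := hlb hj
            have hsplit : ∑ i ∈ Finset.range j', (u (c + 1 + i)).length =
                (∑ i ∈ Finset.range (j' - 1), (u (c + 1 + 1 + i)).length) + (u (c+1)).length := by
              rw [show j' = (j' - 1) + 1 by omega, Finset.sum_range_succ']
              congr 1
              refine Finset.sum_congr rfl fun i _ => ?_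
              rw [show c + 1 + (i + 1) = c + 1 + 1 + i by omega]
            rw [hsum, hsplit]
            omega

end Helpers

lemma sum_cast_sq_le (N : ℕ) : (N : ℝ)^2 / 2 ≤ ∑ i ∈ Finset.range N, (1 + (i : ℝ)) := by
  induction N with
  | zero => simp
  | succ n ih =>
    rw [Finset.sum_range_succ]
    push_cast
    nlinarith

lemma sum_sqrt_lb (N : ℕ) :
    (N : ℝ) * Real.sqrt N / 2 ≤ ∑ i ∈ Finset.range N, Real.sqrt (1 + i) := by
  rcases Nat.eq_zero_or_pos N with h | h
  · simp [h]
  have hN1 : (1 : ℝ) ≤ N := by exact_mod_cast h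
  have hsN : 0 < Real.sqrt N := Real.sqrt_pos.2 (by linarith)
  have hstep : ∀ i ∈ Finset.range N, (1 + (i : ℝ)) / Real.sqrt N ≤ Real.sqrt (1 + i) := by
    intro i hi
    simp only [Finset.mem_range] at hi
    have hle : (1 + (i:ℝ)) ≤ N := by
      have : (i : ℝ) + 1 ≤ N := by exact_mod_cast hi
      linarith
    have h0 : (0:ℝ) ≤ 1 + i := by positivity
    rw [div_le_iff₀ hsN]
    have := Real.mul_self_sqrt h0
    have hmono : Real.sqrt (1 + i) ≤ Real.sqrt N := Real.sqrt_le_sqrt hle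
    nlinarith [Real.sqrt_nonneg (1 + (i:ℝ))]
  have hsum := Finset.sum_le_sum hstep
  rw [← Finset.sum_div] at hsum
  have h2 := sum_cast_sq_le N
  have hNN := Real.mul_self_sqrt (show (0:ℝ) ≤ N by linarith)
  have : (N:ℝ)^2 / 2 / Real.sqrt N ≤ ∑ i ∈ Finset.range N, Real.sqrt (1 + i) :=
    le_trans (by gcongr) hsum
  rw [div_le_iff₀ hsN] at this
  have key : (N:ℝ) * Real.sqrt N * Real.sqrt N = (N:ℝ)^2 := by
    rw [mul_assoc, hNN]; ring
  nlinarith [this, hsN, key]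

lemma le_rpow23 {N : ℕ} {X : ℝ} (hX : 0 ≤ X)
    (h : (N : ℝ) * Real.sqrt N ≤ X) : (N : ℝ) ≤ X ^ ((2:ℝ)/3) := by
  rcases Nat.eq_zero_or_pos N with h0 | h0
  · subst h0; simpa using Real.rpow_nonneg hX _
  have hNpos : (0:ℝ) < N := by exact_mod_cast h0
  have h32 : (N:ℝ) ^ ((3:ℝ)/2) = (N:ℝ) * Real.sqrt N := by
    rw [show (3:ℝ)/2 = 1 + 1/2 by norm_num, Real.rpow_add hNpos, Real.rpow_one,
      Real.sqrt_eq_rpow]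
  have hNe : ((N:ℝ) ^ ((3:ℝ)/2)) ^ ((2:ℝ)/3) = (N:ℝ) := by
    rw [← Real.rpow_mul (le_of_lt hNpos), show (3:ℝ)/2 * (2/3) = 1 by norm_num,
      Real.rpow_one]
  calc (N:ℝ) = ((N:ℝ) ^ ((3:ℝ)/2)) ^ ((2:ℝ)/3) := hNe.symm
    _ ≤ X ^ ((2:ℝ)/3) :=
      Real.rpow_le_rpow (Real.rpow_nonneg (le_of_lt hNpos) _) (h32 ▸ h) (by norm_num)


set_option maxHeartbeats 1600000 in
/-- Let `L ⊆ S*` be a normal form of `G`, `C₁, C₂ > 0`, and for each `w ∈ L` and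
`k ∈ {1,…,|w|}` let `u w k` be a word with `π(u w k) = e` and
`C₁√k ≤ |u w k| ≤ C₂√k`. Then `L'' = { s₁ u₁ s₂ u₂ … s_r u_r : w = s₁…s_r ∈ L }`
is a normal form of `G` and its fellow-traveler function `s` satisfies
`s(n) ⪯ n^{2/3}`. -/
theorem secondWay_normalForm_pow23_fellow {G : Type*} [Group G] [Infinite G] {m : ℕ}
    (A : Fin m → G) (L : Set (List (Letter m))) (hL : IsNormalForm A L)
    (C₁ C₂ : ℝ) (hC₁ : 0 < C₁) (hC₂ : 0 < C₂)
    (u : List (Letter m) → ℕ → List (Letter m))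
    (hloop : ∀ w ∈ L, ∀ k : ℕ, 1 ≤ k → k ≤ w.length → wordEval A (u w k) = 1)
    (hlen : ∀ w ∈ L, ∀ k : ℕ, 1 ≤ k → k ≤ w.length →
      C₁ * Real.sqrt k ≤ ((u w k).length : ℝ) ∧ ((u w k).length : ℝ) ≤ C₂ * Real.sqrt k) :
    IsNormalForm A {w' | ∃ w ∈ L, w' = interleave (u w) 0 w} ∧
    FPreceq (fun n => (ftFun A {w' | ∃ w ∈ L, w' = interleave (u w) 0 w} n : ℝ))
      (fun n => (n : ℝ) ^ ((2 : ℝ) / 3)) := by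
  set L'' : Set (List (Letter m)) := {w' | ∃ w ∈ L, w' = interleave (u w) 0 w} with hL''
  have heval'' : ∀ w ∈ L, wordEval A (interleave (u w) 0 w) = wordEval A w := by
    intro w hw
    exact interleave_eval A (u w) w 0
      (fun i h1 h2 => hloop w hw i h1 (by simpa using h2))
  constructor
  · intro g
    obtain ⟨w, ⟨hwL, hwe⟩, huni⟩ := hL g
    refine ⟨interleave (u w) 0 w, ⟨⟨w, hwL, rfl⟩, by rw [heval'' w hwL, hwe]⟩, ?_⟩
    rintro y ⟨⟨w₂, hw₂L, rfl⟩, hy⟩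
    rw [huni w₂ ⟨hw₂L, by rw [← heval'' w₂ hw₂L]; exact hy⟩]
  · -- fellow traveler bound
    set K0 : ℝ := 2 * (1 + C₂) * ((2 / C₁) ^ ((2:ℝ)/3) + 1) with hK0
    have hK0pos : 0 ≤ K0 := by
      have : (0:ℝ) ≤ (2 / C₁) ^ ((2:ℝ)/3) := Real.rpow_nonneg (by positivity) _
      nlinarith
    refine ⟨⌈K0⌉₊ + 1, 1, 1, Nat.succ_pos _, Nat.one_pos, ?_⟩
    intro n hn
    simp only [one_mul]
    set B : ℝ := ((⌈K0⌉₊ + 1 : ℕ) : ℝ) * (n : ℝ) ^ ((2:ℝ)/3) with hB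
    have hn23 : (1:ℝ) ≤ (n : ℝ) ^ ((2:ℝ)/3) := by
      calc (1:ℝ) = (1:ℝ) ^ ((2:ℝ)/3) := (Real.one_rpow _).symm
        _ ≤ (n : ℝ) ^ ((2:ℝ)/3) :=
          Real.rpow_le_rpow zero_le_one (by exact_mod_cast hn) (by norm_num)
    have hBnn : 0 ≤ B := by
      have : (0:ℝ) ≤ (n : ℝ) ^ ((2:ℝ)/3) := Real.rpow_nonneg (Nat.cast_nonneg n) _
      positivity
    -- key estimate for a single word
    have hside : ∀ w ∈ L, ∀ t ≤ n, ∃ v : List (Letter m),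
        wordEval A v = wordEval A ((interleave (u w) 0 w).take t) ∧
        ((v.length : ℝ)) ≤ (1 + C₂) * ((2 * n / C₁) ^ ((2:ℝ)/3) + 1) := by
      intro w hw t ht
      obtain ⟨j, p, hjle, hj0, hple, heval, hlb⟩ :=
        interleave_take A (u w) w 0 t
          (fun i h1 h2 => hloop w hw i h1 (by simpa using h2))
      simp only [Nat.zero_add] at hple heval hlb
      refine ⟨w.take j ++ (u w j).take p, heval.symm, ?_⟩
      have hlenv : ((w.take j ++ (u w j).take p).length : ℝ) = (j : ℝ) + (p : ℝ) := by
        rw [List.length_append, List.length_take, List.length_take,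
          min_eq_left hjle, min_eq_left hple]
        push_cast; ring
      rw [hlenv]
      rcases Nat.eq_zero_or_pos j with hj | hj
      · have hp0 := hj0 hj
        subst hj; subst hp0
        have h1 : (0:ℝ) ≤ (2 * n / C₁) ^ ((2:ℝ)/3) := Real.rpow_nonneg (by positivity) _
        simp only [Nat.cast_zero, add_zero]
        nlinarith
      · -- j ≥ 1
        have hlb' := hlb hj
        -- lower bound on t from sum of loop lengths
        have hsum_le : ((∑ i ∈ Finset.range (j-1), (u w (1 + i)).length : ℕ) : ℝ) ≤ (n : ℝ) := by
          have h1 : (∑ i ∈ Finset.range (j-1), (u w (1 + i)).length) ≤ n := by omega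
          exact_mod_cast h1
        have hsqrt_le : C₁ * (((j-1 : ℕ) : ℝ) * Real.sqrt ((j-1 : ℕ)) / 2) ≤ (n : ℝ) := by
          have h2 : ∀ i ∈ Finset.range (j-1),
              C₁ * Real.sqrt (1 + i) ≤ ((u w (1 + i)).length : ℝ) := by
            intro i hi
            simp only [Finset.mem_range] at hi
            have := (hlen w hw (1 + i) (by omega) (by omega)).1
            convert this using 3
            push_cast; ring
          have h3 := Finset.sum_le_sum h2
          rw [← Finset.mul_sum] at h3
          have h4 := sum_sqrt_lb (j - 1)
          have h5 : ((∑ i ∈ Finset.range (j-1), (u w (1 + i)).length : ℕ) : ℝ)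
              = ∑ i ∈ Finset.range (j-1), ((u w (1 + i)).length : ℝ) := by push_cast; ring
          rw [h5] at hsum_le
          nlinarith [mul_le_mul_of_nonneg_left h4 (le_of_lt hC₁)]
        have hj1le : ((j - 1 : ℕ) : ℝ) ≤ (2 * n / C₁) ^ ((2:ℝ)/3) := by
          apply le_rpow23 (by positivity)
          rw [le_div_iff₀ hC₁]
          nlinarith [hsqrt_le]
        have hjR : (j : ℝ) ≤ (2 * n / C₁) ^ ((2:ℝ)/3) + 1 := by
          have hc : ((j - 1 : ℕ) : ℝ) = (j : ℝ) - 1 := by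
            have h1 : (1:ℕ) ≤ j := hj
            rw [Nat.cast_sub h1, Nat.cast_one]
          rw [hc] at hj1le
          linarith
        have hsj : Real.sqrt j ≤ (j : ℝ) := by
          have h1 : (1:ℝ) ≤ (j:ℝ) := by exact_mod_cast hj
          have h2 : Real.sqrt j * Real.sqrt j = (j:ℝ) :=
            Real.mul_self_sqrt (by linarith)
          have h3 : (1:ℝ) ≤ Real.sqrt j := by
            rw [show (1:ℝ) = Real.sqrt 1 by simp]
            exact Real.sqrt_le_sqrt h1
          nlinarith
        have hpR : (p : ℝ) ≤ C₂ * (j : ℝ) := by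
          have h1 : (p : ℝ) ≤ ((u w j).length : ℝ) := by exact_mod_cast hple
          have h2 := (hlen w hw j hj hjle).2
          nlinarith
        have hjpos : (0:ℝ) ≤ (j:ℝ) := Nat.cast_nonneg j
        have hstep1 : (j : ℝ) + (p : ℝ) ≤ (1 + C₂) * (j : ℝ) := by nlinarith [hpR]
        have hstep2 : (1 + C₂) * (j : ℝ)
            ≤ (1 + C₂) * ((2 * n / C₁) ^ ((2:ℝ)/3) + 1) :=
          mul_le_mul_of_nonneg_left hjR (by linarith)
        linarith
    -- bound every element of the ftFun set
    have hub : ∀ d ∈ {d | ∃ t ≤ n, ∃ w₁ ∈ L'', ∃ w₂ ∈ L'', ∃ i : Fin m,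
        wordEval A w₁ * A i = wordEval A w₂ ∧
        d = wordDist A (wordEval A (w₁.take t)) (wordEval A (w₂.take t))},
        (d : ℝ) ≤ B := by
      rintro d ⟨t, ht, w₁', ⟨w₁, hw₁L, rfl⟩, w₂', ⟨w₂, hw₂L, rfl⟩, i, -, rfl⟩
      obtain ⟨v₁, hv₁e, hv₁l⟩ := hside w₁ hw₁L t ht
      obtain ⟨v₂, hv₂e, hv₂l⟩ := hside w₂ hw₂L t ht
      have hd := wordDist_le_two A _ _ v₁ v₂ hv₁e hv₂e
      have hdR : ((wordDist A (wordEval A ((interleave (u w₁) 0 w₁).take t))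
          (wordEval A ((interleave (u w₂) 0 w₂).take t))) : ℝ)
          ≤ (v₁.length : ℝ) + (v₂.length : ℝ) := by exact_mod_cast hd
      have hmul : (2 * n / C₁) ^ ((2:ℝ)/3) = (2 / C₁) ^ ((2:ℝ)/3) * (n:ℝ) ^ ((2:ℝ)/3) := by
        rw [show (2 * (n:ℝ) / C₁) = (2 / C₁) * (n:ℝ) by ring,
          Real.mul_rpow (by positivity) (Nat.cast_nonneg n)]
      have hK0le : K0 ≤ ((⌈K0⌉₊ + 1 : ℕ) : ℝ) := by
        push_cast
        linarith [Nat.le_ceil K0]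
      have h0 : (0:ℝ) ≤ (n : ℝ) ^ ((2:ℝ)/3) := Real.rpow_nonneg (Nat.cast_nonneg n) _
      have h1 : (0:ℝ) ≤ (2 / C₁) ^ ((2:ℝ)/3) := Real.rpow_nonneg (by positivity) _
      have hfin : (1 + C₂) * ((2 * n / C₁) ^ ((2:ℝ)/3) + 1)
          + (1 + C₂) * ((2 * n / C₁) ^ ((2:ℝ)/3) + 1) ≤ B := by
        rw [hmul, hB]
        have hKB : K0 * ((n:ℝ) ^ ((2:ℝ)/3)) ≤ ((⌈K0⌉₊ + 1 : ℕ):ℝ) * ((n:ℝ) ^ ((2:ℝ)/3)) :=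
          mul_le_mul_of_nonneg_right hK0le h0
        rw [hK0] at hKB
        have hprod : (1 + C₂) * ((2 / C₁) ^ ((2:ℝ)/3) + 1)
            ≤ (1 + C₂) * ((2 / C₁) ^ ((2:ℝ)/3) + 1) * ((n:ℝ) ^ ((2:ℝ)/3)) := by
          nlinarith [hn23, h1, hC₂.le]
        nlinarith [hprod, h0, h1, hC₂.le, hn23]
      linarith
    -- conclude via sSup
    have hubn : ftFun A L'' n ≤ ⌊B⌋₊ := by
      apply csSup_le'
      intro d hd
      exact Nat.le_floor (hub d hd)
    calc (ftFun A L'' n : ℝ) ≤ (⌊B⌋₊ : ℝ) := by exact_mod_cast hubn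
      _ ≤ B := Nat.floor_le hBnn
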